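/- Let J be a cocommutative Hopf algebra over a field k and K ⊆ J a Hopf subalgebra such that J is projective as a right K-module. Then for any surjective morphism p : M → N of right K-modules that are also right J-comodules (with K-action and J-coaction compatible, i.e., objects of the category of J-comodules internal to K-modules, J coacting cocommutatively), if p admits a J-colinear section, then p admits a section that is simultaneously K-linear and J-colinear. -/

import Mathlib

/-!
Average a `J`-colinear section `s₀` of `p` over the adjoint action of `K`. Since `J` is a
projective right `K`-module and `ε_K` is onto, `ε_J` lifts to a right `K`-linear `ξ : J → K`
with `ε_K ∘ ξ = ε_J`; put `s(n) = s₀(n⁽⁰⁾ S(ξ(n⁽¹⁾)₍₁₎)) ξ(n⁽¹⁾)₍₂₎`. As `p` is `K`-linear,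
`p ∘ s = id` by the antipode axiom. The antipode being anti-multiplicative and `ξ` being
`K`-linear make `s` `K`-linear. For cocommutative `K`, `Δ ∘ S = (S ⊗ S) ∘ Δ` and `Δ` is a coalgebra
map, which make each `n ↦ s₀(n S(c₍₁₎)) c₍₂₎` colinear; coassociativity of the coaction and
cocommutativity of `J` then make `s` colinear.
-/

open scoped TensorProduct

section

variable (k : Type*) [Field k]
variable (J : Type*) [Ring J] [HopfAlgebra k J]
variable (K : Type*) [Ring K] [HopfAlgebra k K]

/-- The map `J ⊗ K → J`, `a ⊗ c ↦ a·ι(c)`. -/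
noncomputable def mulByK (ι : K →ₐ[k] J) : J ⊗[k] K →ₗ[k] J :=
  LinearMap.mul' k J ∘ₗ LinearMap.lTensor J ι.toLinearMap

/-- The map `M ⊗ K → M ⊗ J`, `m ⊗ c ↦ (m⁽⁰⁾ · c₍₁₎) ⊗ m⁽¹⁾·ι(c₍₂₎)`, expressing the
`Mod_K^J`-compatibility of a right `K`-action and a right `J`-coaction on `M`. -/
noncomputable def diagCoaction (ι : K →ₐ[k] J) {M : Type*} [AddCommGroup M] [Module k M]
    (actM : M →ₗ[k] K →ₗ[k] M) (ρM : M →ₗ[k] M ⊗[k] J) : M ⊗[k] K →ₗ[k] M ⊗[k] J :=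
  TensorProduct.map (TensorProduct.lift actM) (mulByK k J K ι)
    ∘ₗ (TensorProduct.tensorTensorTensorComm k M J K K).toLinearMap
    ∘ₗ TensorProduct.map ρM (Coalgebra.comul (R := k) (A := K))

end

section Cocommutative
open Coalgebra TensorProduct

variable {R C : Type*} [CommSemiring R] [AddCommMonoid C] [Module R C] [Coalgebra R C]
  [IsCocomm R C] {c : C} {I : Type*} {κ Λ : I → Type*}

theorem Coalgebra.sum_tmul_tmul_middle_comm (r : Repr R c I)
    (rl : ∀ i, Repr R (r.left i) (κ i)) (rr : ∀ i, Repr R (r.right i) (Λ i)) :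
    ∑ i ∈ r.index, ∑ s ∈ (rl i).index, ∑ t ∈ (rr i).index,
      ((rl i).left s ⊗ₜ[R] (rl i).right s) ⊗ₜ[R] ((rr i).left t ⊗ₜ[R] (rr i).right t)
    = ∑ i ∈ r.index, ∑ s ∈ (rl i).index, ∑ t ∈ (rr i).index,
      ((rl i).left s ⊗ₜ[R] (rr i).left t) ⊗ₜ[R] ((rl i).right s ⊗ₜ[R] (rr i).right t) := by
  have h : _root_.TensorProduct.map comul comul (comul c) = comul (R := R) (comul c : C ⊗[R] C) :=
    CoalgHomClass.map_comp_comul_apply (comulCoalgHom R C) c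
  simp only [← r.eq, map_sum, _root_.TensorProduct.map_tmul, TensorProduct.comul_tmul,
    AlgebraTensorModule.tensorTensorTensorComm_eq] at h
  simp only [← (rl _).eq, ← (rr _).eq, sum_tmul, tmul_sum, map_sum,
    tensorTensorTensorComm_tmul] at h
  convert h using 1 <;> exact Finset.sum_congr rfl fun i _ => Finset.sum_comm

variable {M N : Type*} [AddCommMonoid M] [Module R M] [AddCommMonoid N] [Module R N]
  {ρM : M →ₗ[R] M ⊗[R] C} {ρN : N →ₗ[R] N ⊗[R] C}

theorem rightComm_comp_assoc_symm_comp_lTensor_comul :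
    (TensorProduct.rightComm R N C C).toLinearMap ∘ₗ (TensorProduct.assoc R N C C).symm.toLinearMap
      ∘ₗ comul.lTensor N = (TensorProduct.assoc R N C C).symm.toLinearMap ∘ₗ comul.lTensor N := by
  rw [TensorProduct.rightComm_def]
  ext n c
  simp

theorem lift_comp_coaction_colinear
    (hcoassoc : (TensorProduct.assoc R N C C).toLinearMap ∘ₗ ρN.rTensor C ∘ₗ ρN
      = comul.lTensor N ∘ₗ ρN)
    (F : N →ₗ[R] C →ₗ[R] M) (hF : ∀ a, ρM ∘ₗ F.flip a = (F.flip a).rTensor C ∘ₗ ρN) :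
    ρM ∘ₗ lift F ∘ₗ ρN = (lift F ∘ₗ ρN).rTensor C ∘ₗ ρN := by
  have hρF : ρM ∘ₗ lift F
      = (lift F).rTensor C ∘ₗ (TensorProduct.rightComm R N C C).toLinearMap ∘ₗ ρN.rTensor C := by
    refine TensorProduct.ext' fun n a => ?_
    have key (x : N ⊗[R] C) : (F.flip a).rTensor C x
        = (lift F).rTensor C (TensorProduct.rightComm R N C C (x ⊗ₜ a)) := by
      induction x using TensorProduct.induction_on with
      | zero => simp
      | tmul n b => simp
      | add x y hx hy => simp [add_tmul, hx, hy]
    simpa using (congr($(hF a) n)).trans (key (ρN n))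
  have hcoassoc' : ρN.rTensor C ∘ₗ ρN
      = (TensorProduct.assoc R N C C).symm.toLinearMap ∘ₗ comul.lTensor N ∘ₗ ρN := by
    rw [← hcoassoc]; ext; simp
  calc ρM ∘ₗ lift F ∘ₗ ρN
      = (lift F).rTensor C ∘ₗ (TensorProduct.rightComm R N C C).toLinearMap
          ∘ₗ (ρN.rTensor C ∘ₗ ρN) := by
        rw [← LinearMap.comp_assoc, hρF]; simp only [LinearMap.comp_assoc]
    _ = (lift F).rTensor C ∘ₗ ((TensorProduct.rightComm R N C C).toLinearMap
          ∘ₗ (TensorProduct.assoc R N C C).symm.toLinearMap ∘ₗ comul.lTensor N) ∘ₗ ρN := by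
        rw [hcoassoc']; simp only [LinearMap.comp_assoc]
    _ = (lift F ∘ₗ ρN).rTensor C ∘ₗ ρN := by
        rw [rightComm_comp_assoc_symm_comp_lTensor_comul, LinearMap.comp_assoc, ← hcoassoc',
          LinearMap.rTensor_comp, LinearMap.comp_assoc]

end Cocommutative

section Hopf
open Coalgebra HopfAlgebra TensorProduct WithConv

variable {R A B : Type*} [CommSemiring R] [Semiring A] [HopfAlgebra R A]

theorem BialgHom.antipode_comp [Semiring B] [HopfAlgebra R B] (f : A →ₐc[R] B) :
    antipode R ∘ₗ (f : A →ₗ[R] B) = (f : A →ₗ[R] B) ∘ₗ antipode R := by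
  have hleft : toConv (antipode R ∘ₗ (f : A →ₗ[R] B)) * toConv (f : A →ₗ[R] B) = 1 := by
    have := LinearMap.convMul_comp_coalgHom_distrib (toConv (antipode R (A := B)))
      (toConv LinearMap.id) (f : A →ₗc[R] B)
    rw [LinearMap.antipode_mul_id] at this
    exact WithConv.ofConv_injective (this.symm.trans (by ext; simp))
  have hright : toConv (f : A →ₗ[R] B) * toConv ((f : A →ₗ[R] B) ∘ₗ antipode R) = 1 := by
    have := LinearMap.algHom_comp_convMul_distrib (f : A →ₐ[R] B)
      (toConv LinearMap.id) (toConv (antipode R (A := A)))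
    rw [LinearMap.id_mul_antipode] at this
    exact WithConv.ofConv_injective (this.symm.trans (by ext; simp [AlgHomClass.commutes]))
  exact congrArg ofConv (left_inv_eq_right_inv hleft hright)

theorem HopfAlgebra.comul_antipode [IsCocomm R A] (a : A) :
    comul (antipode R a) = TensorProduct.map (antipode R) (antipode R) (comul a) :=
  congr($(BialgHom.antipode_comp (Bialgebra.comulBialgHom R A)) a).symm

variable {a : A} {I : Type*} {κ Λ : I → Type*}

noncomputable def Coalgebra.Repr.antipode [IsCocomm R A] (r : Repr R a I) :
    Repr R (HopfAlgebra.antipode R a) I where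
  index := r.index
  left i := HopfAlgebra.antipode R (r.left i)
  right i := HopfAlgebra.antipode R (r.right i)
  eq := by simp [comul_antipode, ← r.eq]

theorem HopfAlgebra.sum_mul_antipode_tmul (r : Repr R a I)
    (rr : ∀ i, Repr R (r.right i) (Λ i)) :
    ∑ i ∈ r.index, ∑ j ∈ (rr i).index, (r.left i * antipode R ((rr i).left j)) ⊗ₜ[R] (rr i).right j
      = (1 : A) ⊗ₜ[R] a := by
  have h := congr(((LinearMap.mul' R A ∘ₗ (antipode R).lTensor A).rTensor A ∘ₗ
    (TensorProduct.assoc R A A A).symm.toLinearMap)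
      $(sum_tmul_tmul_eq r (fun i => ℛ R (r.left i)) rr))
  simp only [map_sum, LinearMap.comp_apply, LinearEquiv.coe_coe, TensorProduct.assoc_symm_tmul,
    LinearMap.rTensor_tmul, LinearMap.lTensor_tmul, LinearMap.mul'_apply] at h
  rw [← h]
  simp only [← sum_tmul, sum_mul_antipode_eq_smul, smul_tmul, ← tmul_sum, sum_counit_smul]

theorem HopfAlgebra.sum_tmul_tmul_antipode_mul [IsCocomm R A] (r : Repr R a I)
    (rl : ∀ i, Repr R (r.left i) (κ i)) (rr : ∀ i, Repr R (r.right i) (Λ i)) :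
    ∑ i ∈ r.index, ∑ s ∈ (rl i).index, ∑ t ∈ (rr i).index,
      (rl i).left s ⊗ₜ[R] ((rr i).left t ⊗ₜ[R] (antipode R ((rl i).right s) * (rr i).right t))
    = ∑ i ∈ r.index, r.left i ⊗ₜ[R] (r.right i ⊗ₜ[R] (1 : A)) := by
  have h := congr(((TensorProduct.assoc R A A A).toLinearMap ∘ₗ
    (LinearMap.mul' R A ∘ₗ (antipode R).rTensor A).lTensor (A ⊗[R] A))
      $(sum_tmul_tmul_middle_comm r rl rr))
  simp only [map_sum, LinearMap.comp_apply, LinearEquiv.coe_coe, TensorProduct.assoc_tmul,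
    LinearMap.rTensor_tmul, LinearMap.lTensor_tmul, LinearMap.mul'_apply] at h
  rw [← h]
  have hcounit := sum_map_tmul_tmul_eq LinearMap.id LinearMap.id
    (Algebra.linearMap R A ∘ₗ counit) a (repr := r) (a₁ := rl) (a₂ := rr)
  simp only [LinearMap.id_apply, LinearMap.comp_apply, Algebra.linearMap_apply] at hcounit
  simp only [← tmul_sum, sum_antipode_mul_eq_algebraMap_counit, ← hcounit]
  refine Finset.sum_congr rfl fun i _ => ?_
  have := congr(LinearMap.lTensor A (Algebra.linearMap R A) $(sum_tmul_counit_eq (rr i)))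
  simp only [map_sum, LinearMap.lTensor_tmul, Algebra.linearMap_apply, map_one] at this
  rw [this]

end Hopf

section CounitLift
open Coalgebra

variable {k J K : Type*} [CommRing k] [Ring J] [Bialgebra k J] [Ring K] [Bialgebra k K]

theorem exists_rightLinear_counit_comp_eq (ι : K →ₐ[k] J)
    (hιcounit : counit ∘ₗ ι.toLinearMap = counit (R := k) (A := K))
    (hproj : @Module.Projective Kᵐᵒᵖ _ J _ (Module.compHom J (RingHom.op ι.toRingHom))) :
    ∃ ξ : J →ₗ[k] K, (∀ a c, ξ (a * ι c) = ξ a * c) ∧ counit ∘ₗ ξ = counit (R := k) (A := J) := by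
  let _ : Module Kᵐᵒᵖ J := Module.compHom J (RingHom.op ι.toRingHom)
  let _ : Module Kᵐᵒᵖ k := Module.compHom k
    (RingHom.fromOpposite (Bialgebra.counitAlgHom k K).toRingHom fun _ _ => Commute.all _ _)
  have smulJ (r : Kᵐᵒᵖ) (a : J) : r • a = a * ι r.unop := rfl
  have smulK (r : Kᵐᵒᵖ) (c : K) : r • c = c * r.unop := rfl
  have smulk (r : Kᵐᵒᵖ) (t : k) : r • t = counit (R := k) r.unop * t := rfl
  have hει (c : K) : counit (R := k) (ι c) = counit c := congr($hιcounit c)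
  let εK : K →ₗ[Kᵐᵒᵖ] k :=
    { toFun := counit
      map_add' := map_add _
      map_smul' r c := by simp [smulK, smulk, mul_comm] }
  let εJ : J →ₗ[Kᵐᵒᵖ] k :=
    { toFun := counit
      map_add' := map_add _
      map_smul' r a := by simp [smulJ, smulk, mul_comm, hει] }
  have hεK : Function.Surjective εK := fun t => ⟨algebraMap k K t, by simp [εK]⟩
  obtain ⟨ξ, hξ⟩ := Module.projective_lifting_property εK εJ hεK
  refine ⟨{ toFun := ξ, map_add' := map_add ξ, map_smul' := fun t a => ?_ }, fun a c => ?_, ?_⟩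
  · have : t • a = MulOpposite.op (algebraMap k K t) • a := by
      rw [smulJ, MulOpposite.unop_op, AlgHom.commutes, Algebra.smul_def, Algebra.commutes]
    rw [RingHom.id_apply, this, map_smul, smulK, MulOpposite.unop_op, Algebra.smul_def,
      Algebra.commutes]
  · exact ξ.map_smul (MulOpposite.op c) a
  · exact LinearMap.ext fun a => congr($hξ a)

end CounitLift

namespace RelativeHopfModule
open Coalgebra HopfAlgebra TensorProduct

section AdjointAction

variable {k K M N : Type*} [CommSemiring k] [Semiring K] [HopfAlgebra k K]
  [AddCommMonoid M] [Module k M] [AddCommMonoid N] [Module k N]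
  {actM : M →ₗ[k] K →ₗ[k] M} {actN : N →ₗ[k] K →ₗ[k] N}

variable (actM actN) in
/-- The adjoint action `(f · c)(n) = f(n·S(c₍₁₎))·c₍₂₎` of `K` on `Hom(N, M)`. -/
noncomputable def adjointAct (f : N →ₗ[k] M) : N →ₗ[k] K →ₗ[k] M :=
  TensorProduct.curry (lift actM ∘ₗ (f ∘ₗ lift actN).rTensor K
    ∘ₗ (TensorProduct.assoc k N K K).symm.toLinearMap
    ∘ₗ ((antipode k).rTensor K ∘ₗ comul).lTensor N)

theorem adjointAct_apply (f : N →ₗ[k] M) {c : K} {I : Type*} (r : Repr k c I) (n : N) :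
    adjointAct actM actN f n c
      = ∑ i ∈ r.index, actM (f (actN n (antipode k (r.left i)))) (r.right i) := by
  simp [adjointAct, ← r.eq, tmul_sum]

theorem comp_lift_adjointAct {p : M →ₗ[k] N} {f : N →ₗ[k] M}
    (hp : ∀ m c, p (actM m c) = actN (p m) c) (hf : ∀ n, p (f n) = n)
    (hact_one : ∀ n, actN n 1 = n) (hact_mul : ∀ n c d, actN (actN n c) d = actN n (c * d)) :
    p ∘ₗ lift (adjointAct actM actN f) = TensorProduct.rid k N ∘ₗ counit.lTensor N := by
  refine TensorProduct.ext' fun n c => ?_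
  simp only [LinearMap.comp_apply, lift.tmul, adjointAct_apply f (ℛ k c), map_sum, hp, hf,
    hact_mul, ← map_sum (actN n), sum_antipode_mul_eq_smul, map_smul, hact_one]
  simp

end AdjointAction

variable {k J K M N : Type*} [Field k] [Ring J] [HopfAlgebra k J] [Ring K] [HopfAlgebra k K]
  [AddCommGroup M] [Module k M] [AddCommGroup N] [Module k N]
  {ι : K →ₐ[k] J} {actM : M →ₗ[k] K →ₗ[k] M} {actN : N →ₗ[k] K →ₗ[k] N}
  {ρM : M →ₗ[k] M ⊗[k] J} {ρN : N →ₗ[k] N ⊗[k] J}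

variable (ι actM) in
/-- The diagonal right action `m ⊗ a ↦ m·c₍₁₎ ⊗ a·ι(c₍₂₎)` of `c ∈ K` on `M ⊗ J`. -/
noncomputable def diagAct (c : K) : M ⊗[k] J →ₗ[k] M ⊗[k] J :=
  TensorProduct.map (lift actM) (mulByK k J K ι)
    ∘ₗ (tensorTensorTensorComm k M J K K).toLinearMap ∘ₗ (TensorProduct.mk k _ _).flip (comul c)

theorem diagAct_tmul {c : K} {I : Type*} (r : Repr k c I) (m : M) (a : J) :
    diagAct ι actM c (m ⊗ₜ a) = ∑ i ∈ r.index, actM m (r.left i) ⊗ₜ (a * ι (r.right i)) := by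
  simp [diagAct, mulByK, ← r.eq]

theorem coaction_act (hcompat : ρM ∘ₗ lift actM = diagCoaction k J K ι actM ρM) (m : M) (c : K) :
    ρM (actM m c) = diagAct ι actM c (ρM m) := by
  simpa [diagCoaction, diagAct] using congr($hcompat (m ⊗ₜ c))

theorem comp_coaction_comp_lift_act (hcompat : ρN ∘ₗ lift actN = diagCoaction k J K ι actN ρN)
    {G : N ⊗[k] J →ₗ[k] M} (hG : ∀ e, G ∘ₗ diagAct ι actN e = actM.flip e ∘ₗ G) :
    (G ∘ₗ ρN) ∘ₗ lift actN = lift actM ∘ₗ (G ∘ₗ ρN).rTensor K := by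
  refine TensorProduct.ext' fun n e => ?_
  simpa [coaction_act hcompat] using congr($(hG e) (ρN n))

theorem lTensor_comp_diagAct {ξ : J →ₗ[k] K} (hξ : ∀ a c, ξ (a * ι c) = ξ a * c) (c : K) :
    ξ.lTensor N ∘ₗ diagAct ι actN c = diagAct (AlgHom.id k K) actN c ∘ₗ ξ.lTensor N := by
  refine TensorProduct.ext' fun n a => ?_
  simp [diagAct_tmul (ℛ k c), hξ]

theorem lift_adjointAct_comp_diagAct (f : N →ₗ[k] M)
    (hactM_mul : ∀ m c d, actM (actM m c) d = actM m (c * d))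
    (hactN_mul : ∀ n c d, actN (actN n c) d = actN n (c * d)) (e : K) :
    lift (adjointAct actM actN f) ∘ₗ diagAct (AlgHom.id k K) actN e
      = actM.flip e ∘ₗ lift (adjointAct actM actN f) := by
  refine TensorProduct.ext' fun n c => ?_
  set r := ℛ k c
  set re := ℛ k e
  set re₂ := fun v => ℛ k (re.right v)
  have hB (j : _) := congr(TensorProduct.lift ((actM ∘ₗ f ∘ₗ actN n
      ∘ₗ LinearMap.mulRight k (antipode k (r.left j))).compl₂ (LinearMap.mulLeft k (r.right j)))
    $(sum_mul_antipode_tmul re re₂))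
  simp only [map_sum, lift.tmul, LinearMap.compl₂_apply, LinearMap.comp_apply,
    LinearMap.mulRight_apply, LinearMap.mulLeft_apply, one_mul] at hB
  calc lift (adjointAct actM actN f) (diagAct (AlgHom.id k K) actN e (n ⊗ₜ c))
      = ∑ v ∈ re.index, ∑ j ∈ r.index, ∑ u ∈ (re₂ v).index,
          actM (f (actN n (re.left v * antipode k ((re₂ v).left u) * antipode k (r.left j))))
            (r.right j * (re₂ v).right u) := by
        simp only [diagAct_tmul re, map_sum, lift.tmul, AlgHom.id_apply,
          adjointAct_apply f (r.mul (re₂ _)), Repr.mul_index, Repr.mul_left, Repr.mul_right,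
          Finset.sum_product, antipode_mul_antidistrib, hactN_mul, mul_assoc]
    _ = ∑ j ∈ r.index, actM (f (actN n (antipode k (r.left j)))) (r.right j * e) := by
        rw [Finset.sum_comm]
        exact Finset.sum_congr rfl fun j _ => hB j
    _ = actM (lift (adjointAct actM actN f) (n ⊗ₜ c)) e := by
        simp [adjointAct_apply f r, hactM_mul]

theorem adjointAct_colinear [IsCocomm k K] {f : N →ₗ[k] M}
    (hcompatM : ρM ∘ₗ lift actM = diagCoaction k J K ι actM ρM)
    (hcompatN : ρN ∘ₗ lift actN = diagCoaction k J K ι actN ρN)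
    (hf : ρM ∘ₗ f = f.rTensor J ∘ₗ ρN) (c : K) :
    ρM ∘ₗ (adjointAct actM actN f).flip c = ((adjointAct actM actN f).flip c).rTensor J ∘ₗ ρN := by
  set r := ℛ k c
  set rl := fun i => ℛ k (r.left i)
  set rr := fun i => ℛ k (r.right i)
  have key (x : N ⊗[k] J) : ∑ i ∈ r.index, diagAct ι actM (r.right i)
      (f.rTensor J (diagAct ι actN (antipode k (r.left i)) x))
      = ((adjointAct actM actN f).flip c).rTensor J x := by
    induction x using TensorProduct.induction_on with
    | zero => simp
    | add x y hx hy => simp only [map_add, Finset.sum_add_distrib, hx, hy]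
    | tmul n a =>
      have h := congr((TensorProduct.map (lift (actM ∘ₗ f ∘ₗ actN n ∘ₗ antipode k))
          (LinearMap.mulLeft k a ∘ₗ ι.toLinearMap)
        ∘ₗ (TensorProduct.assoc k K K K).symm.toLinearMap) $(sum_tmul_tmul_antipode_mul r rl rr))
      simp only [map_sum, LinearMap.comp_apply, LinearEquiv.coe_coe, TensorProduct.assoc_symm_tmul,
        TensorProduct.map_tmul, lift.tmul, LinearMap.mulLeft_apply, AlgHom.toLinearMap_apply,
        map_mul, map_one, mul_one] at h
      simp only [diagAct_tmul ((rl _).antipode), diagAct_tmul (rr _), map_sum,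
        LinearMap.rTensor_tmul, Repr.antipode, LinearMap.flip_apply, adjointAct_apply f r,
        sum_tmul, mul_assoc]
      rw [← h]
  refine LinearMap.ext fun n => ?_
  rw [LinearMap.comp_apply, LinearMap.comp_apply, LinearMap.flip_apply, adjointAct_apply f r,
    map_sum, ← key]
  simp only [coaction_act hcompatM, ← LinearMap.comp_apply ρM f, hf, LinearMap.comp_apply,
    coaction_act hcompatN]

end RelativeHopfModule

section

variable (k : Type*) [Field k]
variable (J : Type*) [Ring J] [HopfAlgebra k J]
variable (K : Type*) [Ring K] [HopfAlgebra k K]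

open RelativeHopfModule

theorem maschke_type_splitting
    (hcocommJ : ∀ a : J, (TensorProduct.comm k J J) (Coalgebra.comul a) = Coalgebra.comul a)
    (hcocommK : ∀ c : K, (TensorProduct.comm k K K) (Coalgebra.comul c) = Coalgebra.comul c)
    (ι : K →ₐ[k] J)
    (hιcounit : Coalgebra.counit (R := k) (A := J) ∘ₗ ι.toLinearMap
        = Coalgebra.counit (R := k) (A := K))
    -- `J` is projective as a right `K`-module (via `ι` and right multiplication)
    (hproj : @Module.Projective Kᵐᵒᵖ _ J _ (Module.compHom J (RingHom.op ι.toRingHom)))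
    -- `M` is an object of `Mod_K^J`
    (M : Type*) [AddCommGroup M] [Module k M]
    (actM : M →ₗ[k] K →ₗ[k] M)
    (hactMmul : ∀ (m : M) (c d : K), actM (actM m c) d = actM m (c * d))
    (ρM : M →ₗ[k] M ⊗[k] J)
    (hcompatM : ρM ∘ₗ TensorProduct.lift actM = diagCoaction k J K ι actM ρM)
    -- `N` is an object of `Mod_K^J`
    (N : Type*) [AddCommGroup N] [Module k N]
    (actN : N →ₗ[k] K →ₗ[k] N)
    (hactN1 : ∀ n : N, actN n 1 = n)
    (hactNmul : ∀ (n : N) (c d : K), actN (actN n c) d = actN n (c * d))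
    (ρN : N →ₗ[k] N ⊗[k] J)
    (hcounitN : ∀ n : N,
      (TensorProduct.rid k N) (((Coalgebra.counit (R := k) (A := J)).lTensor N) (ρN n)) = n)
    (hcoassocN : (TensorProduct.assoc k N J J).toLinearMap ∘ₗ ρN.rTensor J ∘ₗ ρN
        = (Coalgebra.comul (R := k) (A := J)).lTensor N ∘ₗ ρN)
    (hcompatN : ρN ∘ₗ TensorProduct.lift actN = diagCoaction k J K ι actN ρN)
    -- `p : M → N` is a surjective morphism of `Mod_K^J`
    (p : M →ₗ[k] N)
    (hpK : p ∘ₗ TensorProduct.lift actM = TensorProduct.lift actN ∘ₗ p.rTensor K)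
    -- `p` splits `J`-colinearly
    (hsplit : ∃ s₀ : N →ₗ[k] M, p ∘ₗ s₀ = LinearMap.id ∧ ρM ∘ₗ s₀ = s₀.rTensor J ∘ₗ ρN) :
    -- then `p` splits in `Mod_K^J`
    ∃ s : N →ₗ[k] M,
      p ∘ₗ s = LinearMap.id ∧
      s ∘ₗ TensorProduct.lift actN = TensorProduct.lift actM ∘ₗ s.rTensor K ∧
      ρM ∘ₗ s = s.rTensor J ∘ₗ ρN := by
  have : Coalgebra.IsCocomm k J := ⟨LinearMap.ext hcocommJ⟩
  have : Coalgebra.IsCocomm k K := ⟨LinearMap.ext hcocommK⟩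
  obtain ⟨s₀, hs₀p, hs₀J⟩ := hsplit
  obtain ⟨ξ, hξK, hξε⟩ := exists_rightLinear_counit_comp_eq ι hιcounit hproj
  set T := adjointAct actM actN s₀
  refine ⟨(TensorProduct.lift T ∘ₗ ξ.lTensor N) ∘ₗ ρN, ?_, ?_, ?_⟩
  · have hT := comp_lift_adjointAct (fun m c => congr($hpK (m ⊗ₜ c))) (fun n => congr($hs₀p n))
      hactN1 hactNmul
    refine LinearMap.ext fun n => (congr($hT (ξ.lTensor N (ρN n)))).trans ?_
    rw [LinearMap.comp_apply, ← LinearMap.comp_apply (Coalgebra.counit.lTensor N),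
      ← LinearMap.lTensor_comp, hξε]
    exact hcounitN n
  · refine comp_coaction_comp_lift_act hcompatN fun e => ?_
    rw [LinearMap.comp_assoc, lTensor_comp_diagAct hξK, ← LinearMap.comp_assoc,
      lift_adjointAct_comp_diagAct s₀ hactMmul hactNmul, LinearMap.comp_assoc]
  · have hF : TensorProduct.lift T ∘ₗ ξ.lTensor N = TensorProduct.lift (T.compl₂ ξ) :=
      TensorProduct.ext' fun _ _ => rfl
    rw [hF]
    exact lift_comp_coaction_colinear hcoassocN _ fun a =>
      adjointAct_colinear hcompatM hcompatN hs₀J (ξ a)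

end
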